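/- arXiv:1402.1588 — 5 statements merged into one kernel-verified Lean document; each statement's English description precedes it below -/
import Mathlib

section
/- Let 𝒜 be an abelian category with enough projective and injective objects, and set silp 𝒜 = sup{ id_𝒜 P : P projective } and spli 𝒜 = sup{ pd_𝒜 I : I injective }. If an object X of 𝒜 has finite projective dimension, then id_𝒜 X ≤ silp 𝒜; dually, if X has finite injective dimension, then pd_𝒜 X ≤ spli 𝒜. -/
/-!
STATEMENT 3: Let 𝒜 be an abelian category with enough projective and injective objects.
If an object `X` has finite projective dimension, then `id X ≤ silp 𝒜`
(the supremum of injective dimensions of projective objects); dually, if `X` has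
finite injective dimension, then `pd X ≤ spli 𝒜`.

We express `pd X ≤ n` (resp. `id X ≤ n`) by the vanishing of `Ext^i(X,-)` (resp.
`Ext^i(-,X)`) for `i > n`, and `id X ≤ silp 𝒜` by: for every `m : ℕ` which is an upper
bound for the injective dimensions of all projective objects, `id X ≤ m`.
-/

open CategoryTheory

universe w v u

/-- `X` has projective dimension at most `n`: `Ext^i(X, -) = 0` for `i > n`. -/
def pdLE {C : Type u} [Category.{v} C] [Abelian C] [HasExt.{w} C]
    (X : C) (n : ℕ) : Prop :=
  ∀ (i : ℕ), n < i → ∀ (Y : C), Subsingleton (Abelian.Ext X Y i)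

/-- `X` has injective dimension at most `n`: `Ext^i(-, X) = 0` for `i > n`. -/
def idLE {C : Type u} [Category.{v} C] [Abelian C] [HasExt.{w} C]
    (X : C) (n : ℕ) : Prop :=
  ∀ (i : ℕ), n < i → ∀ (Y : C), Subsingleton (Abelian.Ext Y X i)

/-!
Induction on the projective dimension of `X`: a projective `X` is covered by the hypothesis, and
otherwise `0 ⟶ K ⟶ P ⟶ X ⟶ 0` with `P` projective has `pd K < pd X`, so by induction
`Ext^i(-, P)` and `Ext^(i+1)(-, K)` vanish for `i > m`, and the long exact `Ext` sequence
squeezes `Ext^i(-, X)` between them. The second statement is dual.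
-/

open Limits

namespace CategoryTheory

variable {C : Type u} [Category.{v} C] [Abelian C]

lemma pdLE_iff_hasProjectiveDimensionLE [HasExt.{w} C] (X : C) (n : ℕ) :
    pdLE.{w} X n ↔ HasProjectiveDimensionLE X n := by
  rw [HasProjectiveDimensionLE, hasProjectiveDimensionLT_iff.{w}]
  exact ⟨fun h i hi Y e ↦ (h i hi Y).elim e 0,
    fun h i hi Y ↦ ⟨fun e e' ↦ (h i hi e).trans (h i hi e').symm⟩⟩

lemma idLE_iff_hasInjectiveDimensionLE [HasExt.{w} C] (X : C) (n : ℕ) :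
    idLE.{w} X n ↔ HasInjectiveDimensionLE X n := by
  rw [HasInjectiveDimensionLE, hasInjectiveDimensionLT_iff.{w}]
  exact ⟨fun h i hi Y e ↦ (h i hi Y).elim e 0,
    fun h i hi Y ↦ ⟨fun e e' ↦ (h i hi e).trans (h i hi e').symm⟩⟩

lemma hasInjectiveDimensionLE_of_hasProjectiveDimensionLE [EnoughProjectives C] {m : ℕ}
    (hm : ∀ P : C, Projective P → HasInjectiveDimensionLE P m) {n : ℕ} {X : C}
    (hX : HasProjectiveDimensionLE X n) : HasInjectiveDimensionLE X m := by
  induction n generalizing X with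
  | zero =>
    exact hm X ((projective_iff_hasProjectiveDimensionLE_zero X).2 hX)
  | succ n ih =>
    have hS : (ShortComplex.mk _ _ (kernel.condition (Projective.π X))).ShortExact :=
      { exact := ShortComplex.exact_kernel _ }
    have hK : HasProjectiveDimensionLE (kernel (Projective.π X)) n :=
      hS.hasProjectiveDimensionLT_X₁ (n + 1)
        (hasProjectiveDimensionLT_of_ge _ 1 _ (by omega)) hX
    have := ih hK
    exact hS.hasInjectiveDimensionLT_X₃ (m + 1) (hm _ inferInstance)
      (hasInjectiveDimensionLT_of_ge _ (m + 1) _ (by omega))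

lemma hasProjectiveDimensionLE_of_hasInjectiveDimensionLE [EnoughInjectives C] {m : ℕ}
    (hm : ∀ I : C, Injective I → HasProjectiveDimensionLE I m) {n : ℕ} {X : C}
    (hX : HasInjectiveDimensionLE X n) : HasProjectiveDimensionLE X m := by
  induction n generalizing X with
  | zero =>
    exact hm X (injective_iff_hasInjectiveDimensionLT_one.2 hX)
  | succ n ih =>
    have hS : (ShortComplex.mk _ _ (cokernel.condition (Injective.ι X))).ShortExact :=
      { exact := ShortComplex.exact_cokernel _ }
    have hK : HasInjectiveDimensionLE (cokernel (Injective.ι X)) n :=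
      hS.hasInjectiveDimensionLT_X₃ (n + 1)
        (hasInjectiveDimensionLT_of_ge _ 1 _ (by omega)) hX
    have := ih hK
    exact hS.hasProjectiveDimensionLT_X₁ (m + 1) (hm _ inferInstance)
      (hasProjectiveDimensionLT_of_ge _ (m + 1) _ (by omega))

end CategoryTheory

theorem stmt_3 {C : Type u} [Category.{v} C] [Abelian C]
    [EnoughProjectives C] [EnoughInjectives C] [HasExt.{w} C] (X : C) :
    ((∃ n : ℕ, pdLE.{w} X n) →
      ∀ m : ℕ, (∀ P : C, Projective P → idLE.{w} P m) → idLE.{w} X m) ∧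
    ((∃ n : ℕ, idLE.{w} X n) →
      ∀ m : ℕ, (∀ I : C, Injective I → pdLE.{w} I m) → pdLE.{w} X m) := by
  simp only [pdLE_iff_hasProjectiveDimensionLE, idLE_iff_hasInjectiveDimensionLE]
  exact ⟨fun ⟨n, hX⟩ _ hm ↦ hasInjectiveDimensionLE_of_hasProjectiveDimensionLE hm hX,
    fun ⟨n, hX⟩ _ hm ↦ hasProjectiveDimensionLE_of_hasInjectiveDimensionLE hm hX⟩
end

section
/- Let f : 𝒟 → ℱ be an exact functor between abelian categories with enough projectives and injectives, and let t be a nonnegative integer. Suppose that for all objects D, D' of 𝒟 and all j > t there are isomorphisms Ext^j_𝒟(D,D') ≅ Ext^j_ℱ(f(D), f(D')) induced by f, and that f is essentially surjective. Then for every object D of 𝒟 one has pd_ℱ f(D) ≤ max{pd_𝒟 D, t} and pd_𝒟 D ≤ max{pd_ℱ f(D), t}, and the analogous inequalities hold for injective dimensions. -/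
/-!
STATEMENT 4: Let `f : 𝒟 → ℱ` be an exact functor between abelian categories with enough
projectives and injectives, let `t ≥ 0`, and suppose `f` is an essentially surjective
`t`-homological isomorphism, i.e. for all `D, D'` and all `j > t` there are isomorphisms
`Ext^j_𝒟(D, D') ≅ Ext^j_ℱ(f D, f D')`.  Then for every object `D` of `𝒟` we have
`pd_ℱ (f D) ≤ max (pd_𝒟 D) t`, `pd_𝒟 D ≤ max (pd_ℱ (f D)) t`, and the analogous
inequalities for injective dimensions.

`pd X ≤ n` (resp. `id X ≤ n`) is expressed by vanishing of `Ext^i(X,-)` (resp.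
`Ext^i(-,X)`) for `i > n`, and the inequality `pd_ℱ (f D) ≤ max (pd_𝒟 D) t` by:
for every `m`, if `pd_𝒟 D ≤ m` then `pd_ℱ (f D) ≤ max m t`.
-/

open CategoryTheory

universe w w' v u v' u'

open Abelian

namespace CategoryTheory

section ExtIso

variable {C : Type u} [Category.{v} C] [Abelian C] [HasExt.{w} C]

lemma subsingleton_ext_of_iso_right {A Y Y' : C} (e : Y ≅ Y') (i : ℕ)
    [Subsingleton (Ext A Y' i)] : Subsingleton (Ext A Y i) :=
  Equiv.subsingleton (β := Ext A Y' i)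
    ((extFunctorObj A i).mapIso e).addCommGroupIsoToAddEquiv.toEquiv

lemma subsingleton_ext_of_iso_left {A A' Y : C} (e : A ≅ A') (i : ℕ)
    [Subsingleton (Ext A' Y i)] : Subsingleton (Ext A Y i) :=
  Equiv.subsingleton (β := Ext A' Y i)
    (((extFunctor i).mapIso e.symm.op).app Y).addCommGroupIsoToAddEquiv.toEquiv

end ExtIso

section EssSurj

variable {C : Type u} [Category.{v} C] [Abelian C] [HasExt.{w} C]
  {C' : Type u'} [Category.{v'} C'] (f : C' ⥤ C) [f.EssSurj]

lemma pdLE_of_essSurj {A : C} {n : ℕ}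
    (h : ∀ i, n < i → ∀ Y : C', Subsingleton (Ext A (f.obj Y) i)) : pdLE.{w} A n :=
  fun i hi Y =>
    have := h i hi (f.objPreimage Y)
    subsingleton_ext_of_iso_right (f.objObjPreimageIso Y).symm i

lemma idLE_of_essSurj {A : C} {n : ℕ}
    (h : ∀ i, n < i → ∀ Y : C', Subsingleton (Ext (f.obj Y) A i)) : idLE.{w} A n :=
  fun i hi Y =>
    have := h i hi (f.objPreimage Y)
    subsingleton_ext_of_iso_left (f.objObjPreimageIso Y).symm i

end EssSurj

/-- The paper's `t`-homological isomorphisms. -/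
def Functor.IsHomologicalIsoAbove {D : Type u} [Category.{v} D] [Abelian D] [HasExt.{w} D]
    {F : Type u'} [Category.{v'} F] [Abelian F] [HasExt.{w'} F] (f : D ⥤ F) (t : ℕ) : Prop :=
  ∀ (X Y : D) (j : ℕ), t < j → Nonempty (Ext.{w} X Y j ≃+ Ext.{w'} (f.obj X) (f.obj Y) j)

namespace Functor.IsHomologicalIsoAbove

variable {D : Type u} [Category.{v} D] [Abelian D] [HasExt.{w} D]
  {F : Type u'} [Category.{v'} F] [Abelian F] [HasExt.{w'} F]
  {f : D ⥤ F} {t : ℕ} (hf : f.IsHomologicalIsoAbove t) {X : D} {m : ℕ}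
include hf

lemma pdLE_map [f.EssSurj] (h : pdLE.{w} X m) : pdLE.{w'} (f.obj X) (max m t) :=
  pdLE_of_essSurj f fun i hi Y =>
    have := h i (max_lt_iff.1 hi).1 Y
    (hf X Y i (max_lt_iff.1 hi).2).some.toEquiv.symm.subsingleton

lemma pdLE_of_pdLE_map (h : pdLE.{w'} (f.obj X) m) : pdLE.{w} X (max m t) :=
  fun i hi Y =>
    have := h i (max_lt_iff.1 hi).1 (f.obj Y)
    (hf X Y i (max_lt_iff.1 hi).2).some.toEquiv.subsingleton

lemma idLE_map [f.EssSurj] (h : idLE.{w} X m) : idLE.{w'} (f.obj X) (max m t) :=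
  idLE_of_essSurj f fun i hi Y =>
    have := h i (max_lt_iff.1 hi).1 Y
    (hf Y X i (max_lt_iff.1 hi).2).some.toEquiv.symm.subsingleton

lemma idLE_of_idLE_map (h : idLE.{w'} (f.obj X) m) : idLE.{w} X (max m t) :=
  fun i hi Y =>
    have := h i (max_lt_iff.1 hi).1 (f.obj Y)
    (hf Y X i (max_lt_iff.1 hi).2).some.toEquiv.subsingleton

end Functor.IsHomologicalIsoAbove

end CategoryTheory

theorem stmt_4_general {D : Type u} [Category.{v} D] [Abelian D]
    [HasExt.{w} D]
    {F : Type u'} [Category.{v'} F] [Abelian F]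
    [HasExt.{w'} F]
    (f : D ⥤ F)
    [f.EssSurj]
    (t : ℕ)
    (hf : ∀ (X Y : D) (j : ℕ), t < j →
      Nonempty (Abelian.Ext X Y j ≃+ Abelian.Ext (f.obj X) (f.obj Y) j))
    (X : D) (m : ℕ) :
    (pdLE.{w} X m → pdLE.{w'} (f.obj X) (max m t)) ∧
    (pdLE.{w'} (f.obj X) m → pdLE.{w} X (max m t)) ∧
    (idLE.{w} X m → idLE.{w'} (f.obj X) (max m t)) ∧
    (idLE.{w'} (f.obj X) m → idLE.{w} X (max m t)) :=
  open Functor.IsHomologicalIsoAbove in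
  ⟨pdLE_map hf, pdLE_of_pdLE_map hf, idLE_map hf, idLE_of_idLE_map hf⟩

theorem stmt_4 {D : Type u} [Category.{v} D] [Abelian D]
    [EnoughProjectives D] [EnoughInjectives D] [HasExt.{w} D]
    {F : Type u'} [Category.{v'} F] [Abelian F]
    [EnoughProjectives F] [EnoughInjectives F] [HasExt.{w'} F]
    (f : D ⥤ F) [f.Additive]
    [Limits.PreservesFiniteLimits f] [Limits.PreservesFiniteColimits f]
    [f.EssSurj]
    (t : ℕ)
    (hf : ∀ (X Y : D) (j : ℕ), t < j →
      Nonempty (Abelian.Ext X Y j ≃+ Abelian.Ext (f.obj X) (f.obj Y) j))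
    (X : D) (m : ℕ) :
    (pdLE.{w} X m → pdLE.{w'} (f.obj X) (max m t)) ∧
    (pdLE.{w'} (f.obj X) m → pdLE.{w} X (max m t)) ∧
    (idLE.{w} X m → idLE.{w'} (f.obj X) (max m t)) ∧
    (idLE.{w'} (f.obj X) m → idLE.{w} X (max m t)) :=
  stmt_4_general f t hf X m
end

section
/- Let R be a ring graded over the nonnegative integers. Then R is noetherian if and only if R satisfies the ascending chain condition on graded (homogeneous) ideals. -/
/-!
STATEMENT 6: Let `R` be a ring graded over the nonnegative integers.  Then `R` is
noetherian (both left and right noetherian) if and only if `R` satisfies the ascending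
chain condition on graded left ideals and on graded right ideals.

Right ideals of `R` are left ideals of `Rᵐᵒᵖ`.  A (left or right) ideal `I` is graded
(homogeneous) if it contains all homogeneous components of its elements.  The ascending
chain condition is expressed by stabilization of every monotone sequence.
-/

open DirectSum

universe u

section

variable {R : Type u} [Ring R] (𝒜 : ℕ → AddSubgroup R) [GradedRing 𝒜]

/-- A left ideal is homogeneous if it contains all homogeneous components of its
elements. -/
def IsHomogLeft (I : Ideal R) : Prop :=
  ∀ (i : ℕ) (x : R), x ∈ I → ((DirectSum.decompose 𝒜 x) i : R) ∈ I

/-- A right ideal (a submodule of `R` over `Rᵐᵒᵖ`) is homogeneous if it contains all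
homogeneous components of its elements. -/
def IsHomogRight (I : Submodule Rᵐᵒᵖ R) : Prop :=
  ∀ (i : ℕ) (x : R), x ∈ I → ((DirectSum.decompose 𝒜 x) i : R) ∈ I

end

/-
For a left ideal `I` of an `ℕ`-graded ring, let `Lₙ(I)` be the group of degree-`n` components
of the elements of `I` of degree `≤ n`. Since `a ∈ 𝒜 k` maps `Lₙ(I)` into `Lₖ₊ₙ(I)`, the elements
all of whose components `xₙ` lie in `Lₙ(I)` form a homogeneous left ideal `L(I)`, and `Lₙ(I)` is
recovered from `L(I)` as its degree-`n` part. If `I ≤ J` and `L(J) ≤ L(I)`, then every `x ∈ J` of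
degree `n` agrees in degree `n` with some `y ∈ I` of degree `≤ n`, so induction on the degree
gives `J ≤ I`. Hence an ascending chain of left ideals stabilizes as soon as the chain of their
`L`'s does. Right ideals of `R` are the left ideals of `Rᵐᵒᵖ`, which is graded by the same
subgroups.
-/

def ACCOn {α : Type*} [Preorder α] (p : α → Prop) : Prop :=
  ∀ f : ℕ →o α, (∀ k, p (f k)) → ∃ k₀, ∀ k, k₀ ≤ k → f k = f k₀

theorem OrderIso.accOn_iff {α β : Type*} [Preorder α] [Preorder β] (e : α ≃o β)
    {p : α → Prop} {q : β → Prop} (h : ∀ a, q (e a) ↔ p a) : ACCOn q ↔ ACCOn p := by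
  refine ⟨fun hq f hf => ?_, fun hp f hf => ?_⟩
  · obtain ⟨k₀, hk₀⟩ := hq (e.toOrderEmbedding.toOrderHom.comp f) fun k => (h _).mpr (hf k)
    exact ⟨k₀, fun k hk => e.injective (hk₀ k hk)⟩
  · obtain ⟨k₀, hk₀⟩ := hp (e.symm.toOrderEmbedding.toOrderHom.comp f) fun k =>
      (h _).mp (by simpa using hf k)
    exact ⟨k₀, fun k hk => e.symm.injective (hk₀ k hk)⟩

section LeadingIdeal

variable {A σ : Type*} [Ring A] [SetLike σ A] [AddSubgroupClass σ A] (𝒜 : ℕ → σ) [GradedRing 𝒜]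

namespace GradedRing

def degreeLT (n : ℕ) : AddSubgroup A where
  carrier := {x | ∀ m, n ≤ m → proj 𝒜 m x = 0}
  add_mem' hx hy m hm := by rw [map_add, hx m hm, hy m hm, add_zero]
  zero_mem' m _ := map_zero _
  neg_mem' hx m hm := by rw [map_neg, hx m hm, neg_zero]

variable {𝒜}

theorem exists_mem_degreeLT (x : A) : ∃ n, x ∈ degreeLT 𝒜 n := by
  classical
  obtain ⟨n, hn⟩ := (decompose 𝒜 x).support.exists_nat_subset_range
  refine ⟨n, fun m hm => ?_⟩
  have hm : m ∉ (decompose 𝒜 x).support := fun h => by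
    have := Finset.mem_range.mp (hn h)
    omega
  rw [proj_apply, DFinsupp.notMem_support_iff.mp hm, ZeroMemClass.coe_zero]

theorem eq_zero_of_mem_degreeLT_zero {x : A} (hx : x ∈ degreeLT 𝒜 0) : x = 0 := by
  classical
  rw [← sum_support_decompose 𝒜 x]
  exact Finset.sum_eq_zero fun i _ => hx i i.zero_le

theorem sub_mem_degreeLT_of_proj_eq {n : ℕ} {x y : A} (hx : x ∈ degreeLT 𝒜 (n + 1))
    (hy : y ∈ degreeLT 𝒜 (n + 1)) (hxy : proj 𝒜 n x = proj 𝒜 n y) :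
    x - y ∈ degreeLT 𝒜 n := by
  intro m hm
  rw [map_sub, sub_eq_zero]
  rcases hm.eq_or_lt with rfl | hlt
  · exact hxy
  · rw [hx m hlt, hy m hlt]

theorem mul_mem_degreeLT {k n : ℕ} {a y : A} (ha : a ∈ 𝒜 k) (hy : y ∈ degreeLT 𝒜 n) :
    a * y ∈ degreeLT 𝒜 (k + n) := by
  intro m hm
  rw [proj_apply, coe_decompose_mul_of_left_mem_of_le 𝒜 ha (by omega), ← proj_apply,
    hy _ (by omega), mul_zero]

end GradedRing

namespace Ideal

open GradedRing

variable (I J : Ideal A)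

def leadingPart (n : ℕ) : AddSubgroup A :=
  (I.toAddSubgroup ⊓ degreeLT 𝒜 (n + 1)).map (proj 𝒜 n)

variable {𝒜 I J}

theorem mem_leadingPart {n : ℕ} {t : A} :
    t ∈ I.leadingPart 𝒜 n ↔ ∃ y ∈ I, y ∈ degreeLT 𝒜 (n + 1) ∧ proj 𝒜 n y = t := by
  simp [leadingPart, and_assoc]

theorem mem_of_mem_leadingPart {n : ℕ} {t : A} (ht : t ∈ I.leadingPart 𝒜 n) : t ∈ 𝒜 n := by
  obtain ⟨y, -, -, rfl⟩ := mem_leadingPart.mp ht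
  exact SetLike.coe_mem _

theorem mul_mem_leadingPart {k n : ℕ} {a t : A} (ha : a ∈ 𝒜 k) (ht : t ∈ I.leadingPart 𝒜 n) :
    a * t ∈ I.leadingPart 𝒜 (k + n) := by
  obtain ⟨y, hyI, hy, rfl⟩ := mem_leadingPart.mp ht
  have hay : a * y ∈ degreeLT 𝒜 (k + n + 1) := by
    rw [add_assoc]
    exact mul_mem_degreeLT ha hy
  refine mem_leadingPart.mpr ⟨a * y, I.mul_mem_left a hyI, hay, ?_⟩
  rw [proj_apply, proj_apply, coe_decompose_mul_add_of_left_mem 𝒜 ha]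

theorem leadingPart_mono (h : I ≤ J) (n : ℕ) : I.leadingPart 𝒜 n ≤ J.leadingPart 𝒜 n :=
  AddSubgroup.map_mono (inf_le_inf_right _ h)

variable (𝒜 I) in
def leadingIdeal : Ideal A where
  carrier := {x | ∀ n, proj 𝒜 n x ∈ I.leadingPart 𝒜 n}
  add_mem' hx hy n := by rw [map_add]; exact add_mem (hx n) (hy n)
  zero_mem' n := by rw [map_zero]; exact zero_mem _
  smul_mem' r x hx n := by
    rw [smul_eq_mul, proj_apply, decompose_mul, coe_mul_apply_eq_sum_antidiagonal]
    refine _root_.sum_mem fun ij hij => ?_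
    rw [← Finset.HasAntidiagonal.mem_antidiagonal.mp hij]
    exact mul_mem_leadingPart (SetLike.coe_mem _) (hx ij.2)

theorem leadingIdeal_mono (h : I ≤ J) : I.leadingIdeal 𝒜 ≤ J.leadingIdeal 𝒜 :=
  fun _ hx n => leadingPart_mono h n (hx n)

theorem mem_leadingIdeal_of_mem_leadingPart {n : ℕ} {t : A} (ht : t ∈ I.leadingPart 𝒜 n) :
    t ∈ I.leadingIdeal 𝒜 := by
  intro m
  rw [proj_apply]
  obtain rfl | hnm := eq_or_ne n m
  · rwa [decompose_of_mem_same 𝒜 (mem_of_mem_leadingPart ht)]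
  · rw [decompose_of_mem_ne 𝒜 (mem_of_mem_leadingPart ht) hnm]
    exact zero_mem _

theorem isHomogeneous_leadingIdeal : (I.leadingIdeal 𝒜).IsHomogeneous 𝒜 :=
  fun n _ hx => mem_leadingIdeal_of_mem_leadingPart (hx n)

theorem leadingPart_le_of_leadingIdeal_le (h : I.leadingIdeal 𝒜 ≤ J.leadingIdeal 𝒜) (n : ℕ) :
    I.leadingPart 𝒜 n ≤ J.leadingPart 𝒜 n := fun t ht => by
  simpa [proj_apply, decompose_of_mem_same 𝒜 (mem_of_mem_leadingPart ht)] using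
    h (mem_leadingIdeal_of_mem_leadingPart ht) n

theorem eq_of_le_of_leadingIdeal_le (hIJ : I ≤ J) (h : J.leadingIdeal 𝒜 ≤ I.leadingIdeal 𝒜) :
    I = J := by
  refine le_antisymm hIJ fun x hxJ => ?_
  obtain ⟨n, hx⟩ := exists_mem_degreeLT (𝒜 := 𝒜) x
  induction n generalizing x with
  | zero => rw [eq_zero_of_mem_degreeLT_zero hx]; exact zero_mem _
  | succ n ih =>
    have hlead : proj 𝒜 n x ∈ J.leadingPart 𝒜 n := mem_leadingPart.mpr ⟨x, hxJ, hx, rfl⟩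
    obtain ⟨y, hyI, hy, hyx⟩ := mem_leadingPart.mp (leadingPart_le_of_leadingIdeal_le h n hlead)
    have hxy : x - y ∈ I :=
      ih _ (sub_mem hxJ (hIJ hyI)) (sub_mem_degreeLT_of_proj_eq hx hy hyx.symm)
    simpa using add_mem hxy hyI

end Ideal

theorem GradedRing.isNoetherianRing_iff_accOn_isHomogeneous :
    IsNoetherianRing A ↔ ACCOn (Ideal.IsHomogeneous 𝒜) := by
  refine ⟨fun h f _ => ?_, fun h => monotone_stabilizes_iff_noetherian.mp fun f => ?_⟩
  · obtain ⟨n, hn⟩ := monotone_stabilizes_iff_noetherian.mpr h f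
    exact ⟨n, fun k hk => (hn k hk).symm⟩
  · let leading : ℕ →o Ideal A :=
      ⟨fun k => Ideal.leadingIdeal 𝒜 (f k), fun _ _ hk => Ideal.leadingIdeal_mono (f.mono hk)⟩
    obtain ⟨n, hn⟩ := h leading fun k => Ideal.isHomogeneous_leadingIdeal
    exact ⟨n, fun k hk => Ideal.eq_of_le_of_leadingIdeal_le (f.mono hk) (hn k hk).le⟩

end LeadingIdeal

open MulOpposite

namespace GradedRing

section Opposite

variable {ι R : Type*} [Ring R] (𝒜 : ι → AddSubgroup R)

def opGrading (i : ι) : AddSubgroup Rᵐᵒᵖ :=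
  (𝒜 i).comap (opAddEquiv : R ≃+ Rᵐᵒᵖ).symm.toAddMonoidHom

theorem mem_opGrading {i : ι} {x : Rᵐᵒᵖ} : x ∈ opGrading 𝒜 i ↔ x.unop ∈ 𝒜 i := Iff.rfl

def opGradingAddHom (i : ι) : 𝒜 i →+ opGrading 𝒜 i where
  toFun x := ⟨op x, x.2⟩
  map_zero' := rfl
  map_add' _ _ := rfl

variable [DecidableEq ι]

instance [AddCommMonoid ι] [SetLike.GradedMonoid 𝒜] : SetLike.GradedMonoid (opGrading 𝒜) where
  one_mem := SetLike.one_mem_graded 𝒜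
  mul_mem i j _ _ ha hb := by
    rw [mem_opGrading, unop_mul, add_comm]
    exact SetLike.mul_mem_graded hb ha

theorem coeAddMonoidHom_comp_map_opGradingAddHom :
    (DirectSum.coeAddMonoidHom (opGrading 𝒜)).comp (DirectSum.map (opGradingAddHom 𝒜)) =
      (opAddEquiv : R ≃+ Rᵐᵒᵖ).toAddMonoidHom.comp (DirectSum.coeAddMonoidHom 𝒜) :=
  DirectSum.addHom_ext fun i y => by simp [opGradingAddHom]

instance [Decomposition 𝒜] : Decomposition (opGrading 𝒜) :=
  .ofAddHom _ ((DirectSum.map (opGradingAddHom 𝒜)).comp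
      ((decomposeAddEquiv 𝒜).toAddMonoidHom.comp (opAddEquiv : R ≃+ Rᵐᵒᵖ).symm.toAddMonoidHom))
    (by
      rw [← AddMonoidHom.comp_assoc, coeAddMonoidHom_comp_map_opGradingAddHom]
      ext x
      exact congrArg op (Decomposition.left_inv x))
    (DirectSum.addHom_ext fun i y => by
      simp [decompose_of_mem 𝒜 ((mem_opGrading 𝒜).mp y.2), opGradingAddHom])

instance [AddCommMonoid ι] [GradedRing 𝒜] : GradedRing (opGrading 𝒜) where

end Opposite

end GradedRing

def MulOpposite.opLinearEquivSelf (R : Type*) [Ring R] : R ≃ₗ[Rᵐᵒᵖ] Rᵐᵒᵖ where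
  toFun := op
  invFun := unop
  map_add' _ _ := rfl
  map_smul' _ _ := rfl
  left_inv _ := rfl
  right_inv _ := rfl

-- The components of `op x` for `opGrading 𝒜` are definitionally the `op`s of those of `x`.
theorem isHomogRight_comap_opLinearEquivSelf_iff {R : Type*} [Ring R] (𝒜 : ℕ → AddSubgroup R)
    [GradedRing 𝒜] (I : Ideal Rᵐᵒᵖ) :
    IsHomogRight 𝒜 (Submodule.comap (opLinearEquivSelf R : R →ₗ[Rᵐᵒᵖ] Rᵐᵒᵖ) I) ↔
      I.IsHomogeneous (GradedRing.opGrading 𝒜) :=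
  ⟨fun h i y hy => h i y.unop hy, fun h i _ hx => h i hx⟩

variable {R : Type u} [Ring R] (𝒜 : ℕ → AddSubgroup R) [GradedRing 𝒜]

theorem stmt_6 :
    (IsNoetherianRing R ∧ IsNoetherianRing Rᵐᵒᵖ) ↔
      ((∀ f : ℕ →o Ideal R, (∀ k, IsHomogLeft 𝒜 (f k)) →
          ∃ k₀, ∀ k, k₀ ≤ k → f k = f k₀) ∧
       (∀ f : ℕ →o Submodule Rᵐᵒᵖ R, (∀ k, IsHomogRight 𝒜 (f k)) →
          ∃ k₀, ∀ k, k₀ ≤ k → f k = f k₀)) := by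
  rw [GradedRing.isNoetherianRing_iff_accOn_isHomogeneous 𝒜,
    GradedRing.isNoetherianRing_iff_accOn_isHomogeneous (GradedRing.opGrading 𝒜),
    ← (Submodule.orderIsoMapComap (opLinearEquivSelf R)).symm.accOn_iff
      (isHomogRight_comap_opLinearEquivSelf_iff 𝒜)]
  rfl
end

section
/- Let R = ⊕_{i≥0} R_i and S = ⊕_{i≥0} S_i be nonnegatively graded rings such that R_0 and S_0 are noetherian, each R_i is finitely generated as a left and as a right R_0-module, and each S_i is finitely generated as a left and as a right S_0-module. Suppose there is an integer n ≥ 0 and an isomorphism of graded (non-unital) rings φ : R_{≥n} → S_{≥n}, where R_{≥n} = ⊕_{i≥n} R_i. Then R is noetherian if and only if S is noetherian. -/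
/-!
Left noetherianity of `R` can be tested on ascending chains of graded left ideals, through the
leading forms of left ideals. For such a chain `(I_k)`, the images under `φ` of the pieces of degree
`≥ n` generate an ascending chain of left ideals of `S`, which stabilizes at some `K` because `S` is
noetherian. The limit is generated by finitely many of these images, all of degree `≤ m`; in degree
`d ≥ n + m` an element of it is then a sum of products `a v` with `v` a generator and `a` of degree
`≥ n`, so it pulls back along `φ` into `(I_K)_d`. Hence the chain is stable in degrees `≥ n + m`,
and each of the finitely many lower degrees stabilizes because `R_d` is a noetherian
`R_0`-module. Right noetherianity is the left case for the opposite grading of `Rᵐᵒᵖ`, and the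
converse implication uses `φ⁻¹`.
-/

open DirectSum

universe u v

/-- `𝒜 i` is finitely generated as a left module over `𝒜 0`. -/
def PieceFGLeft {R : Type u} [Ring R] (𝒜 : ℕ → AddSubgroup R) (i : ℕ) : Prop :=
  ∃ s : Finset R, (↑s : Set R) ⊆ (𝒜 i : Set R) ∧
    ∀ x ∈ 𝒜 i, x ∈ AddSubgroup.closure {y | ∃ r ∈ 𝒜 0, ∃ t ∈ s, y = r * t}

/-- `𝒜 i` is finitely generated as a right module over `𝒜 0`. -/
def PieceFGRight {R : Type u} [Ring R] (𝒜 : ℕ → AddSubgroup R) (i : ℕ) : Prop :=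
  ∃ s : Finset R, (↑s : Set R) ⊆ (𝒜 i : Set R) ∧
    ∀ x ∈ 𝒜 i, x ∈ AddSubgroup.closure {y | ∃ r ∈ 𝒜 0, ∃ t ∈ s, y = t * r}

section OppositeGrading

def AddSubgroup.mop {G : Type*} [AddGroup G] (H : AddSubgroup G) : AddSubgroup Gᵐᵒᵖ :=
  H.comap MulOpposite.opAddEquiv.symm.toAddMonoidHom

@[simp]
theorem AddSubgroup.mem_mop {G : Type*} [AddGroup G] {H : AddSubgroup G} {x : Gᵐᵒᵖ} :
    x ∈ H.mop ↔ x.unop ∈ H := Iff.rfl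

def AddSubgroup.equivMop {G : Type*} [AddGroup G] (H : AddSubgroup G) : H ≃+ H.mop where
  toFun x := ⟨MulOpposite.op x, x.2⟩
  invFun x := ⟨x.1.unop, x.2⟩
  map_add' _ _ := rfl

variable {ι R : Type*} [Ring R]

theorem DirectSum.IsInternal.mop [DecidableEq ι] {𝒜 : ι → AddSubgroup R} (h : IsInternal 𝒜) :
    IsInternal fun i => (𝒜 i).mop := by
  let E : (⨁ i, 𝒜 i) ≃+ ⨁ i, (𝒜 i).mop := DFinsupp.mapRange.addEquiv fun i => (𝒜 i).equivMop
  have hE : ∀ w, DirectSum.coeAddMonoidHom (fun i => (𝒜 i).mop) (E w) =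
      MulOpposite.op (DirectSum.coeAddMonoidHom 𝒜 w) := by
    suffices (DirectSum.coeAddMonoidHom fun i => (𝒜 i).mop).comp E.toAddMonoidHom =
        MulOpposite.opAddEquiv.toAddMonoidHom.comp (DirectSum.coeAddMonoidHom 𝒜) from
      DFunLike.congr_fun this
    ext i x
    have hEof : E (DirectSum.of _ i x) = DirectSum.of _ i ((𝒜 i).equivMop x) :=
      DFinsupp.mapRange_single (hf := fun i => map_zero _)
    simp only [AddMonoidHom.comp_apply, AddEquiv.coe_toAddMonoidHom, hEof, coeAddMonoidHom_of]
    rfl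
  have : ⇑(DirectSum.coeAddMonoidHom fun i => (𝒜 i).mop) =
      MulOpposite.op ∘ DirectSum.coeAddMonoidHom 𝒜 ∘ E.symm := by
    funext w
    simp [← hE]
  rw [IsInternal, this]
  exact (MulOpposite.opEquiv.bijective.comp h).comp E.symm.bijective

variable [AddCommMonoid ι] (𝒜 : ι → AddSubgroup R)

instance SetLike.GradedMonoid.mop [SetLike.GradedMonoid 𝒜] :
    SetLike.GradedMonoid fun i => (𝒜 i).mop where
  one_mem := SetLike.one_mem_graded 𝒜
  mul_mem i j x y hx hy := by
    rw [AddSubgroup.mem_mop, add_comm]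
    exact SetLike.mul_mem_graded hy hx

noncomputable instance GradedRing.mop [DecidableEq ι] [GradedRing 𝒜] :
    GradedRing fun i => (𝒜 i).mop :=
  { SetLike.GradedMonoid.mop 𝒜, (Decomposition.isInternal 𝒜).mop.chooseDecomposition with }

variable [SetLike.GradedMonoid 𝒜]

local instance : Ring (𝒜 0).mop := SetLike.GradeZero.instRing fun i => (𝒜 i).mop

theorem isNoetherianRing_gradeZero_mop (h : IsNoetherianRing (𝒜 0)ᵐᵒᵖ) :
    IsNoetherianRing (𝒜 0).mop :=
  isNoetherianRing_of_ringEquiv _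
    { toFun x := ⟨MulOpposite.op (x.unop : R), x.unop.2⟩
      invFun y := MulOpposite.op ⟨(y : Rᵐᵒᵖ).unop, y.2⟩
      map_mul' _ _ := rfl
      map_add' _ _ := rfl : (𝒜 0)ᵐᵒᵖ ≃+* (𝒜 0).mop }

end OppositeGrading

theorem PieceFGRight.mop {R : Type*} [Ring R] {𝒜 : ℕ → AddSubgroup R} {i : ℕ}
    (h : PieceFGRight 𝒜 i) : PieceFGLeft (fun i => (𝒜 i).mop) i := by
  classical
  obtain ⟨s, hs, hgen⟩ := h
  refine ⟨s.image MulOpposite.op, by simpa [Set.subset_def] using hs, fun x hx => ?_⟩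
  have hx' : x ∈ (AddSubgroup.closure {y | ∃ r ∈ 𝒜 0, ∃ t ∈ s, y = t * r}).map
      MulOpposite.opAddEquiv.toAddMonoidHom := ⟨x.unop, hgen _ hx, rfl⟩
  rw [AddMonoidHom.map_closure] at hx'
  refine AddSubgroup.closure_mono ?_ hx'
  rintro _ ⟨_, ⟨r, hr, t, ht, rfl⟩, rfl⟩
  exact ⟨MulOpposite.op r, hr, MulOpposite.op t, Finset.mem_image_of_mem _ ht, rfl⟩

section LeadingPieces

variable {R : Type*} [Ring R] (𝒜 : ℕ → AddSubgroup R)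

/-- A graded left ideal, recorded by its homogeneous pieces. -/
structure IsGradedLeftIdeal (c : ℕ → AddSubgroup R) : Prop where
  le_piece : ∀ d, c d ≤ 𝒜 d
  mul_mem : ∀ ⦃j d : ℕ⦄ ⦃r y : R⦄, r ∈ 𝒜 j → y ∈ c d → r * y ∈ c (j + d)

variable [GradedRing 𝒜]

def degreeLT (d : ℕ) : AddSubgroup R :=
  ⨅ i, ⨅ (_ : d ≤ i), (GradedRing.proj 𝒜 i).ker

def leadingPiece (I : Submodule R R) (d : ℕ) : AddSubgroup R :=
  (I.toAddSubgroup ⊓ degreeLT 𝒜 (d + 1)).map (GradedRing.proj 𝒜 d)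

variable {𝒜}

theorem mem_degreeLT {d : ℕ} {z : R} :
    z ∈ degreeLT 𝒜 d ↔ ∀ i, d ≤ i → GradedRing.proj 𝒜 i z = 0 := by
  simp [degreeLT]

theorem mem_leadingPiece {I : Submodule R R} {d : ℕ} {y : R} :
    y ∈ leadingPiece 𝒜 I d ↔
      ∃ z ∈ I, z ∈ degreeLT 𝒜 (d + 1) ∧ GradedRing.proj 𝒜 d z = y := by
  simp [leadingPiece, and_assoc]

theorem exists_mem_degreeLT (z : R) : ∃ d, z ∈ degreeLT 𝒜 d := by
  classical
  obtain ⟨d, hd⟩ := (decompose 𝒜 z).support.exists_nat_subset_range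
  refine ⟨d, mem_degreeLT.mpr fun i hi => ?_⟩
  have : i ∉ (decompose 𝒜 z).support := fun h =>
    (Finset.mem_range.mp (hd h)).not_ge hi
  simpa [GradedRing.proj_apply] using this

theorem eq_zero_of_mem_degreeLT_zero {z : R} (hz : z ∈ degreeLT 𝒜 0) : z = 0 := by
  classical
  rw [← sum_support_decompose 𝒜 z]
  exact Finset.sum_eq_zero fun i _ => mem_degreeLT.mp hz i i.zero_le

theorem isGradedLeftIdeal_leadingPiece (I : Submodule R R) :
    IsGradedLeftIdeal 𝒜 (leadingPiece 𝒜 I) where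
  le_piece d := by
    rintro _ ⟨z, -, rfl⟩
    exact SetLike.coe_mem _
  mul_mem j d r y hr hy := by
    obtain ⟨z, hzI, hz, rfl⟩ := mem_leadingPiece.mp hy
    refine mem_leadingPiece.mpr ⟨r * z, I.smul_mem r hzI, mem_degreeLT.mpr fun i hi => ?_, ?_⟩
    · rw [GradedRing.proj_apply, coe_decompose_mul_of_left_mem_of_le 𝒜 hr (by omega),
        ← GradedRing.proj_apply, mem_degreeLT.mp hz _ (by omega), mul_zero]
    · rw [GradedRing.proj_apply, coe_decompose_mul_of_left_mem_of_le 𝒜 hr (by omega),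
        Nat.add_sub_cancel_left, GradedRing.proj_apply]

theorem leadingPiece_mono {I J : Submodule R R} (h : I ≤ J) (d : ℕ) :
    leadingPiece 𝒜 I d ≤ leadingPiece 𝒜 J d :=
  AddSubgroup.map_mono (inf_le_inf_right _ h)

theorem eq_of_le_of_leadingPiece_le {I J : Submodule R R} (hIJ : I ≤ J)
    (h : ∀ d, leadingPiece 𝒜 J d ≤ leadingPiece 𝒜 I d) : I = J := by
  suffices ∀ d, ∀ x ∈ J, x ∈ degreeLT 𝒜 d → x ∈ I from
    le_antisymm hIJ fun x hx => this _ x hx (exists_mem_degreeLT x).choose_spec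
  intro d
  induction d with
  | zero =>
    intro x _ hx
    rw [eq_zero_of_mem_degreeLT_zero hx]
    exact zero_mem I
  | succ d ih =>
    intro x hxJ hx
    obtain ⟨z, hzI, hz, hzx⟩ :=
      mem_leadingPiece.mp (h d (mem_leadingPiece.mpr ⟨x, hxJ, hx, rfl⟩))
    have hxz : x - z ∈ degreeLT 𝒜 d := mem_degreeLT.mpr fun i hi => by
      rcases hi.eq_or_lt with rfl | hi
      · rw [map_sub, hzx, sub_self]
      · rw [map_sub, mem_degreeLT.mp hx i hi, mem_degreeLT.mp hz i hi, sub_self]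
    simpa using add_mem (ih (x - z) (sub_mem hxJ (hIJ hzI)) hxz) hzI

variable (𝒜) in
theorem isNoetherianRing_of_gradedLeftIdeal_chains
    (H : ∀ f : ℕ → ℕ → AddSubgroup R, (∀ k, IsGradedLeftIdeal 𝒜 (f k)) → Monotone f →
      ∃ K, ∀ k, K ≤ k → f k = f K) :
    IsNoetherianRing R := by
  rw [isNoetherianRing_iff, ← monotone_stabilizes_iff_noetherian]
  intro I
  obtain ⟨K, hK⟩ := H (fun k => leadingPiece 𝒜 (I k))
    (fun k => isGradedLeftIdeal_leadingPiece _) fun k l hkl => leadingPiece_mono (I.monotone hkl)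
  exact ⟨K, fun k hk =>
    eq_of_le_of_leadingPiece_le (I.monotone hk) fun d => (congrFun (hK k hk) d).le⟩

end LeadingPieces

section PieceStabilization

variable {R : Type*} [Ring R] (𝒜 : ℕ → AddSubgroup R) [GradedRing 𝒜]

local instance : Module (𝒜 0) R := Module.compHom R (SetLike.GradeZero.subring 𝒜).subtype

def pieceSubmodule (d : ℕ) : Submodule (𝒜 0) R where
  toAddSubmonoid := (𝒜 d).toAddSubmonoid
  smul_mem' r x hx := by
    have := SetLike.mul_mem_graded r.2 hx
    rwa [zero_add] at this

variable {𝒜}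

theorem PieceFGLeft.fg_pieceSubmodule {d : ℕ} (h : PieceFGLeft 𝒜 d) :
    (pieceSubmodule 𝒜 d).FG := by
  obtain ⟨s, hs, hgen⟩ := h
  refine ⟨s, le_antisymm (Submodule.span_le.mpr hs) fun x hx => ?_⟩
  refine (AddSubgroup.closure_le (Submodule.span (𝒜 0) (s : Set R)).toAddSubgroup).mpr ?_
    (hgen x hx)
  rintro _ ⟨r, hr, t, ht, rfl⟩
  exact Submodule.smul_mem _ (⟨r, hr⟩ : 𝒜 0) (Submodule.subset_span ht)

theorem PieceFGLeft.exists_stable (h0 : IsNoetherianRing (𝒜 0)) {d : ℕ} (hfg : PieceFGLeft 𝒜 d)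
    {f : ℕ → AddSubgroup R} (hle : ∀ k, f k ≤ 𝒜 d)
    (hmul : ∀ k, ∀ r ∈ 𝒜 0, ∀ y ∈ f k, r * y ∈ f k) (hmono : Monotone f) :
    ∃ K, ∀ k, K ≤ k → f k = f K := by
  let P := pieceSubmodule 𝒜 d
  have : IsNoetherian (𝒜 0) P := isNoetherian_of_fg_of_noetherian _ hfg.fg_pieceSubmodule
  let g : ℕ → Submodule (𝒜 0) R := fun k =>
    { toAddSubmonoid := (f k).toAddSubmonoid
      smul_mem' := fun r y hy => hmul k r r.2 y hy }
  obtain ⟨K, hK⟩ := monotone_stabilizes_iff_noetherian.mpr this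
    ⟨fun k => (g k).comap P.subtype, fun k l hkl => Submodule.comap_mono (hmono hkl)⟩
  have hg : ∀ k, ((g k).comap P.subtype).map P.subtype = g k := fun k => by
    rw [Submodule.map_comap_subtype]
    exact inf_eq_right.mpr (hle k)
  refine ⟨K, fun k hk => ?_⟩
  have : g k = g K := by
    rw [← hg k, ← hg K]
    exact congrArg _ (hK k hk).symm
  exact AddSubgroup.ext fun x => SetLike.ext_iff.mp this x

theorem exists_stable_below_of_pieceFGLeft (h0 : IsNoetherianRing (𝒜 0))
    (hfg : ∀ i, PieceFGLeft 𝒜 i) {f : ℕ → ℕ → AddSubgroup R}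
    (hf : ∀ k, IsGradedLeftIdeal 𝒜 (f k)) (hmono : Monotone f) (D : ℕ) :
    ∃ K, ∀ k, K ≤ k → ∀ d < D, f k d = f K d := by
  choose K hK using fun d => (hfg d).exists_stable h0 (fun k => (hf k).le_piece d)
    (fun k r hr y hy => by simpa using (hf k).mul_mem hr hy) fun k l hkl => hmono hkl d
  refine ⟨(Finset.range D).sup K, fun k hk d hd => ?_⟩
  have hKd : K d ≤ (Finset.range D).sup K := Finset.le_sup (Finset.mem_range.mpr hd)
  rw [hK d k (hKd.trans hk), hK d _ hKd]

end PieceStabilization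

/-- A graded rng isomorphism `R_{≥n} ≅ S_{≥n}`. -/
structure TailIso {R S : Type*} [Ring R] [Ring S] (𝒜 : ℕ → AddSubgroup R)
    (ℬ : ℕ → AddSubgroup S) [SetLike.GradedMonoid 𝒜] (n : ℕ) where
  equiv : ∀ i, n ≤ i → 𝒜 i ≃+ ℬ i
  map_mul : ∀ (i j : ℕ) (hi : n ≤ i) (hj : n ≤ j) (x : 𝒜 i) (y : 𝒜 j),
    (equiv (i + j) (le_trans hi (Nat.le_add_right i j))
        ⟨(x : R) * (y : R), SetLike.mul_mem_graded x.2 y.2⟩ : S) =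
      (equiv i hi x : S) * (equiv j hj y : S)

namespace TailIso

variable {R S : Type*} [Ring R] [Ring S] {𝒜 : ℕ → AddSubgroup R} {ℬ : ℕ → AddSubgroup S}
  {n : ℕ}

section GradedMonoid

variable [SetLike.GradedMonoid 𝒜]

theorem coe_equiv_congr (e : TailIso 𝒜 ℬ n) {i i' : ℕ} (h : i = i') (hi : n ≤ i)
    (hi' : n ≤ i') {x : R} (hx : x ∈ 𝒜 i) (hx' : x ∈ 𝒜 i') :
    (e.equiv i hi ⟨x, hx⟩ : S) = e.equiv i' hi' ⟨x, hx'⟩ := by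
  subst h
  rfl

def symm [SetLike.GradedMonoid ℬ] (e : TailIso 𝒜 ℬ n) : TailIso ℬ 𝒜 n where
  equiv i hi := (e.equiv i hi).symm
  map_mul i j hi hj x y := by
    have h := e.map_mul i j hi hj ((e.equiv i hi).symm x) ((e.equiv j hj).symm y)
    simp only [AddEquiv.apply_symm_apply] at h
    rw [(AddEquiv.symm_apply_eq _).mpr (Subtype.ext h.symm)]

def mop (e : TailIso 𝒜 ℬ n) : TailIso (fun i => (𝒜 i).mop) (fun i => (ℬ i).mop) n where
  equiv i hi := ((𝒜 i).equivMop.symm.trans (e.equiv i hi)).trans (ℬ i).equivMop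
  map_mul i j hi hj x y := by
    show MulOpposite.op _ =
      MulOpposite.op ((e.equiv j hj ⟨y.1.unop, y.2⟩ : S) * e.equiv i hi ⟨x.1.unop, x.2⟩)
    rw [← e.map_mul j i hj hi]
    exact congrArg _ (e.coe_equiv_congr (add_comm i j) _ _ _ _)

end GradedMonoid

section GradedRing

variable [GradedRing 𝒜]

noncomputable def hom (e : TailIso 𝒜 ℬ n) : R →+ S :=
  (toAddMonoid fun d =>
    if h : n ≤ d then (ℬ d).subtype.comp (e.equiv d h).toAddMonoidHom else 0).comp
    (decomposeAddEquiv 𝒜).toAddMonoidHom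

theorem hom_of_mem (e : TailIso 𝒜 ℬ n) {d : ℕ} {x : R} (hx : x ∈ 𝒜 d) (hd : n ≤ d) :
    e.hom x = e.equiv d hd ⟨x, hx⟩ := by
  simp [hom, decompose_of_mem 𝒜 hx, hd]

theorem hom_eq_zero_of_mem (e : TailIso 𝒜 ℬ n) {d : ℕ} {x : R} (hx : x ∈ 𝒜 d) (hd : d < n) :
    e.hom x = 0 := by
  simp [hom, decompose_of_mem 𝒜 hx, not_le.mpr hd]

theorem hom_mem (e : TailIso 𝒜 ℬ n) {d : ℕ} {x : R} (hx : x ∈ 𝒜 d) : e.hom x ∈ ℬ d := by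
  rcases lt_or_ge d n with hd | hd
  · rw [e.hom_eq_zero_of_mem hx hd]
    exact zero_mem _
  · rw [e.hom_of_mem hx hd]
    exact SetLike.coe_mem _

theorem hom_mul (e : TailIso 𝒜 ℬ n) {i j : ℕ} {x y : R} (hx : x ∈ 𝒜 i) (hy : y ∈ 𝒜 j)
    (hi : n ≤ i) (hj : n ≤ j) : e.hom (x * y) = e.hom x * e.hom y := by
  rw [e.hom_of_mem hx hi, e.hom_of_mem hy hj, ← e.map_mul i j hi hj ⟨x, hx⟩ ⟨y, hy⟩,
    e.hom_of_mem (SetLike.mul_mem_graded hx hy)]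

theorem eq_of_hom_eq (e : TailIso 𝒜 ℬ n) {d : ℕ} {x y : R} (hx : x ∈ 𝒜 d) (hy : y ∈ 𝒜 d)
    (hd : n ≤ d) (h : e.hom x = e.hom y) : x = y := by
  rw [e.hom_of_mem hx hd, e.hom_of_mem hy hd] at h
  simpa using (e.equiv d hd).injective (Subtype.ext h)

theorem exists_hom_eq (e : TailIso 𝒜 ℬ n) {d : ℕ} {s : S} (hs : s ∈ ℬ d) (hd : n ≤ d) :
    ∃ x ∈ 𝒜 d, e.hom x = s :=
  ⟨(e.equiv d hd).symm ⟨s, hs⟩, SetLike.coe_mem _, by simp [e.hom_of_mem _ hd]⟩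

variable [GradedRing ℬ]

theorem proj_mem_map_of_mem_span (e : TailIso 𝒜 ℬ n) {c : ℕ → AddSubgroup R}
    (hc : IsGradedLeftIdeal 𝒜 c) {V : Set S} {m : ℕ}
    (hV : ∀ v ∈ V, ∃ j ≤ m, ∃ x ∈ c j, e.hom x = v) {d : ℕ} (hd : n + m ≤ d) {s : S}
    (hs : s ∈ Submodule.span S V) : GradedRing.proj ℬ d s ∈ (c d).map e.hom := by
  obtain ⟨k, a, v, rfl⟩ := Submodule.mem_span_set'.mp hs
  rw [map_sum]
  refine sum_mem fun t _ => ?_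
  obtain ⟨j, hjm, x, hx, hxv⟩ := hV _ (v t).2
  have hxA := hc.le_piece j hx
  rcases lt_or_ge j n with hjn | hnj
  · rw [← hxv, e.hom_eq_zero_of_mem hxA hjn, smul_zero, map_zero]
    exact zero_mem _
  -- The degree-`d` part of `a t * v t` is `(a t)_{d - j} * v t`, a product of two elements of
  -- degree `≥ n`, hence the image of a product in `R`.
  obtain ⟨y, hy, hya⟩ := e.exists_hom_eq (SetLike.coe_mem (decompose ℬ (a t) (d - j)))
    (show n ≤ d - j by omega)
  refine ⟨y * x, ?_, ?_⟩
  · simpa [Nat.sub_add_cancel (show j ≤ d by omega)] using hc.mul_mem hy hx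
  · rw [smul_eq_mul, GradedRing.proj_apply, ← hxv,
      coe_decompose_mul_of_right_mem_of_le ℬ (e.hom_mem hxA) (show j ≤ d by omega),
      e.hom_mul hy hxA (by omega) hnj, hya]

theorem exists_stable_above (e : TailIso 𝒜 ℬ n) (hS : IsNoetherianRing S)
    {f : ℕ → ℕ → AddSubgroup R} (hf : ∀ k, IsGradedLeftIdeal 𝒜 (f k)) (hmono : Monotone f) :
    ∃ D K, ∀ k, K ≤ k → ∀ d, D ≤ d → f k d = f K d := by
  let N : ℕ →o Submodule S S := ⟨fun k => Submodule.span S (⋃ j, e.hom '' f k j),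
    fun k l hkl => Submodule.span_mono (Set.iUnion_mono fun j => Set.image_mono (hmono hkl j))⟩
  obtain ⟨K, hK⟩ := monotone_stabilizes_iff_noetherian.mpr hS N
  obtain ⟨V, hVsub, hVspan⟩ :=
    (Submodule.fg_span_iff_fg_span_finset_subset _).mp (IsNoetherian.noetherian (N K))
  obtain ⟨m, hm⟩ : ∃ m, ∀ v ∈ (V : Set S), ∃ j ≤ m, ∃ x ∈ f K j, e.hom x = v := by
    obtain ⟨I, hIfin, hVI⟩ := Set.finite_subset_iUnion V.finite_toSet hVsub
    obtain ⟨m, hm⟩ := hIfin.bddAbove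
    refine ⟨m, fun v hv => ?_⟩
    obtain ⟨j, hj, x, hx, hxv⟩ : ∃ j ∈ I, ∃ x ∈ f K j, e.hom x = v := by simpa using hVI hv
    exact ⟨j, hm hj, x, hx, hxv⟩
  refine ⟨n + m, K, fun k hk d hd => le_antisymm (fun x hx => ?_) (hmono hk d)⟩
  have hxA := (hf k).le_piece d hx
  have hxV : e.hom x ∈ Submodule.span S V := by
    rw [← hVspan]
    show _ ∈ N K
    rw [hK k hk]
    exact Submodule.subset_span (Set.mem_iUnion_of_mem d ⟨x, hx, rfl⟩)
  obtain ⟨x', hx', hxx'⟩ := e.proj_mem_map_of_mem_span (hf K) hm hd hxV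
  rw [GradedRing.proj_apply, decompose_of_mem_same ℬ (e.hom_mem hxA)] at hxx'
  rwa [← e.eq_of_hom_eq ((hf K).le_piece d hx') hxA (by omega) hxx']

theorem isNoetherianRing (e : TailIso 𝒜 ℬ n) (h0 : IsNoetherianRing (𝒜 0))
    (hfg : ∀ i, PieceFGLeft 𝒜 i) (hS : IsNoetherianRing S) : IsNoetherianRing R := by
  refine isNoetherianRing_of_gradedLeftIdeal_chains 𝒜 fun f hf hmono => ?_
  obtain ⟨D, K₁, hK₁⟩ := e.exists_stable_above hS hf hmono
  obtain ⟨K₂, hK₂⟩ := exists_stable_below_of_pieceFGLeft h0 hfg hf hmono D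
  refine ⟨max K₁ K₂, fun k hk => funext fun d => ?_⟩
  rcases lt_or_ge d D with hd | hd
  · rw [hK₂ k (le_of_max_le_right hk) d hd, hK₂ _ (le_max_right _ _) d hd]
  · rw [hK₁ k (le_of_max_le_left hk) d hd, hK₁ _ (le_max_left _ _) d hd]

theorem isNoetherianRing_mop (e : TailIso 𝒜 ℬ n) (h0 : IsNoetherianRing (𝒜 0)ᵐᵒᵖ)
    (hfg : ∀ i, PieceFGRight 𝒜 i) (hS : IsNoetherianRing Sᵐᵒᵖ) : IsNoetherianRing Rᵐᵒᵖ :=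
  e.mop.isNoetherianRing (isNoetherianRing_gradeZero_mop 𝒜 h0) (fun i => (hfg i).mop) hS

end GradedRing

end TailIso

theorem stmt_7 {R : Type u} {S : Type v} [Ring R] [Ring S]
    (𝒜 : ℕ → AddSubgroup R) [GradedRing 𝒜]
    (ℬ : ℕ → AddSubgroup S) [GradedRing ℬ]
    -- `R₀` and `S₀` are noetherian:
    (hR0 : IsNoetherianRing (𝒜 0) ∧ IsNoetherianRing (𝒜 0)ᵐᵒᵖ)
    (hS0 : IsNoetherianRing (ℬ 0) ∧ IsNoetherianRing (ℬ 0)ᵐᵒᵖ)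
    -- each graded piece is finitely generated on both sides over the degree-zero part:
    (hRfg : ∀ i, PieceFGLeft 𝒜 i ∧ PieceFGRight 𝒜 i)
    (hSfg : ∀ i, PieceFGLeft ℬ i ∧ PieceFGRight ℬ i)
    -- a graded rng isomorphism `R_{≥n} ≅ S_{≥n}`:
    (n : ℕ) (φ : ∀ i, n ≤ i → ((𝒜 i) ≃+ (ℬ i)))
    (hφ : ∀ (i j : ℕ) (hi : n ≤ i) (hj : n ≤ j) (x : 𝒜 i) (y : 𝒜 j),
      (φ (i + j) (le_trans hi (Nat.le_add_right i j))
          ⟨(x : R) * (y : R), SetLike.mul_mem_graded x.2 y.2⟩ : S) =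
        (φ i hi x : S) * (φ j hj y : S)) :
    (IsNoetherianRing R ∧ IsNoetherianRing Rᵐᵒᵖ) ↔
      (IsNoetherianRing S ∧ IsNoetherianRing Sᵐᵒᵖ) := by
  let e : TailIso 𝒜 ℬ n := ⟨φ, hφ⟩
  constructor
  · rintro ⟨hR, hRop⟩
    exact ⟨e.symm.isNoetherianRing hS0.1 (fun i => (hSfg i).1) hR,
      e.symm.isNoetherianRing_mop hS0.2 (fun i => (hSfg i).2) hRop⟩
  · rintro ⟨hS, hSop⟩
    exact ⟨e.isNoetherianRing hR0.1 (fun i => (hRfg i).1) hS,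
      e.isNoetherianRing_mop hR0.2 (fun i => (hRfg i).2) hSop⟩
end

section
/- Let Λ be an artin algebra, a an idempotent of Λ, S a simple Λ-module not annihilated by the two-sided ideal ΛaΛ, and P the projective cover of S. Then aP is a projective aΛa-module. -/
/-!
STATEMENT 13: Let `Λ` be an artin algebra, `a` an idempotent of `Λ`, `S` a simple
`Λ`-module not annihilated by the two-sided ideal `ΛaΛ`, and `P` the projective cover of
`S`.  Then `aP` is a projective `aΛa`-module.

`S` not being annihilated by `ΛaΛ` is equivalent to the existence of `s : S` with
`a • s ≠ 0`.  A projective cover of `S` is a surjection `f : P → S` from a projective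
module `P` with superfluous kernel.  The corner ring `aΛa` is realised as
`{x : Λ // a * x * a = x}` with identity `a`, and `aP = {p : P // a • p = p}`.
-/

universe u

section CornerRing

variable {Λ : Type u} [Ring Λ]

lemma corner_left {a : Λ} (ha : IsIdempotentElem a) {x : Λ}
    (hx : a * x * a = x) : a * x = x := by
  conv_lhs => rw [← hx]
  rw [← mul_assoc, ← mul_assoc, ha.eq, hx]

lemma corner_right {a : Λ} (ha : IsIdempotentElem a) {x : Λ}
    (hx : a * x * a = x) : x * a = x := by
  conv_lhs => rw [← hx]
  rw [mul_assoc, ha.eq, hx]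

variable (a : Λ) [Fact (IsIdempotentElem a)]

/-- The corner (non-unital) subring `aΛa` of `Λ` determined by an idempotent `a`. -/
def cornerSubring : NonUnitalSubring Λ where
  carrier := {x | a * x * a = x}
  zero_mem' := by simp
  add_mem' {x y} hx hy := by
    simp only [Set.mem_setOf_eq] at *
    rw [mul_add, add_mul, hx, hy]
  neg_mem' {x} hx := by
    simp only [Set.mem_setOf_eq] at *
    rw [mul_neg, neg_mul, hx]
  mul_mem' {x y} hx hy := by
    simp only [Set.mem_setOf_eq] at *
    have hx' := corner_left (Fact.out : IsIdempotentElem a) hx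
    have hy' := corner_right (Fact.out : IsIdempotentElem a) hy
    rw [← mul_assoc a x y, hx', mul_assoc x y a, hy']

/-- The corner ring `aΛa` (unital, with identity `a`). -/
def Corner : Type u := cornerSubring a

instance : NonUnitalRing (Corner a) :=
  inferInstanceAs (NonUnitalRing (cornerSubring a))

noncomputable instance : Ring (Corner a) :=
  { (inferInstance : NonUnitalRing (Corner a)) with
    one := ⟨a, by
      show a * a * a = a
      rw [(Fact.out : IsIdempotentElem a).eq, (Fact.out : IsIdempotentElem a).eq]⟩
    one_mul := fun x => Subtype.ext (corner_left Fact.out x.2)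
    mul_one := fun x => Subtype.ext (corner_right Fact.out x.2) }

variable (M : Type u) [AddCommGroup M] [Module Λ M]

/-- The additive subgroup `aM` of a `Λ`-module `M`. -/
def cornerModSub : AddSubgroup M where
  carrier := {m | a • m = m}
  zero_mem' := by simp
  add_mem' {x y} hx hy := by
    simp only [Set.mem_setOf_eq, smul_add] at *
    rw [hx, hy]
  neg_mem' {x} hx := by
    simp only [Set.mem_setOf_eq, smul_neg] at *
    rw [hx]

/-- `aM`, the corner module of `M`, as a module over the corner ring `aΛa`. -/
def CornerMod : Type u := cornerModSub a M

instance : AddCommGroup (CornerMod a M) :=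
  inferInstanceAs (AddCommGroup (cornerModSub a M))

instance : Module (Corner a) (CornerMod a M) where
  smul r m := ⟨r.1 • m.1, by
    show a • (r.1 • m.1) = r.1 • m.1
    rw [← mul_smul, corner_left Fact.out r.2]⟩
  one_smul m := Subtype.ext m.2
  mul_smul r s m := Subtype.ext (mul_smul r.1 s.1 m.1)
  smul_zero r := Subtype.ext (smul_zero r.1)
  smul_add r m n := Subtype.ext (smul_add r.1 m.1 n.1)
  add_smul r s m := Subtype.ext (add_smul r.1 s.1 m.1)
  zero_smul m := Subtype.ext (zero_smul Λ m.1)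

instance : Fact (IsIdempotentElem (MulOpposite.op a)) :=
  ⟨congrArg MulOpposite.op (Fact.out : IsIdempotentElem a).eq⟩

end CornerRing

/-!
Pick `s` with `a • s ≠ 0`. Since `S` is simple it is generated by `a • s`, and lifting this
generator to `p = a • q ∈ aP` gives a generator of `P`, because the kernel of the projective
cover is superfluous. So `l ↦ l • p` is a split surjection `Λ → P`, and compressing a splitting
by `a` on both sides exhibits `aP` as a direct summand of `aΛa`, via `x ↦ x • p`.
-/

theorem Submodule.span_singleton_eq_top_of_superfluous_ker {R M N : Type*} [Ring R]
    [AddCommGroup M] [Module R M] [AddCommGroup N] [Module R N] (f : M →ₗ[R] N)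
    (hsmall : ∀ K : Submodule R M, K ⊔ LinearMap.ker f = ⊤ → K = ⊤) {m : M}
    (hm : span R {f m} = ⊤) : span R {m} = ⊤ := by
  apply hsmall
  rw [← comap_map_eq, map_span, Set.image_singleton, hm, comap_top]

section CornerProjective

variable {Λ : Type u} [Ring Λ] (a : Λ) [Fact (IsIdempotentElem a)]
variable {P : Type u} [AddCommGroup P] [Module Λ P]

noncomputable def cornerToSpanSingleton (p : P) : Corner a →ₗ[Corner a] CornerMod a P where
  toFun x := ⟨x.1 • p, by
    show a • x.1 • p = x.1 • p
    rw [← mul_smul, corner_left Fact.out x.2]⟩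
  map_add' x y := Subtype.ext (add_smul x.1 y.1 p)
  map_smul' r x := Subtype.ext (mul_smul r.1 x.1 p)

noncomputable def cornerCompress (g : P →ₗ[Λ] Λ) : CornerMod a P →ₗ[Corner a] Corner a where
  toFun m := ⟨a * g m.1 * a, by
    show a * (a * g m.1 * a) * a = a * g m.1 * a
    rw [← mul_assoc, ← mul_assoc, (Fact.out : IsIdempotentElem a).eq, mul_assoc _ a a,
      (Fact.out : IsIdempotentElem a).eq]⟩
  map_add' m n := Subtype.ext (by
    show a * g (m.1 + n.1) * a = a * g m.1 * a + a * g n.1 * a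
    rw [map_add, mul_add, add_mul])
  map_smul' r m := Subtype.ext (by
    show a * g (r.1 • m.1) * a = r.1 * (a * g m.1 * a)
    rw [map_smul, smul_eq_mul, ← mul_assoc a, corner_left Fact.out r.2, ← mul_assoc r.1,
      ← mul_assoc r.1, corner_right Fact.out r.2])

theorem cornerToSpanSingleton_comp_cornerCompress {p : P} (hp : a • p = p) {g : P →ₗ[Λ] Λ}
    (hg : ∀ m, g m • p = m) :
    cornerToSpanSingleton a p ∘ₗ cornerCompress a g = LinearMap.id := by
  refine LinearMap.ext fun m => Subtype.ext ?_
  show (a * g m.1 * a) • p = m.1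
  rw [mul_smul, mul_smul, hp, hg]
  exact m.2

theorem CornerMod.projective_of_span_singleton_eq_top [Module.Projective Λ P] {p : P}
    (hp : a • p = p) (hspan : Submodule.span Λ {p} = ⊤) :
    Module.Projective (Corner a) (CornerMod a P) := by
  have hsurj : Function.Surjective (LinearMap.toSpanSingleton Λ P p) := by
    rw [← LinearMap.range_eq_top, LinearMap.range_toSpanSingleton, hspan]
  obtain ⟨g, hg⟩ := Module.projective_lifting_property _ LinearMap.id hsurj
  exact Module.Projective.of_split (cornerCompress a g) (cornerToSpanSingleton a p)
    (cornerToSpanSingleton_comp_cornerCompress a hp fun m => LinearMap.congr_fun hg m)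

end CornerProjective

theorem stmt_13_general {Λ : Type u} [Ring Λ]
    (a : Λ) [Fact (IsIdempotentElem a)]
    (S : Type u) [AddCommGroup S] [Module Λ S] [IsSimpleModule Λ S]
    (hann : ∃ s : S, a • s ≠ 0)
    (P : Type u) [AddCommGroup P] [Module Λ P] [Module.Projective Λ P]
    (f : P →ₗ[Λ] S) (hsurj : Function.Surjective f)
    (hsmall : ∀ N : Submodule Λ P, N ⊔ LinearMap.ker f = ⊤ → N = ⊤) :
    Module.Projective (Corner a) (CornerMod a P) := by
  have ha : IsIdempotentElem a := Fact.out
  obtain ⟨s, hs⟩ := hann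
  obtain ⟨q, hq⟩ := hsurj (a • s)
  have hfp : f (a • q) = a • s := by rw [map_smul, hq, ← mul_smul, ha.eq]
  refine CornerMod.projective_of_span_singleton_eq_top a (p := a • q)
    (by rw [← mul_smul, ha.eq]) ?_
  exact Submodule.span_singleton_eq_top_of_superfluous_ker f hsmall
    (hfp ▸ IsSimpleModule.span_singleton_eq_top Λ hs)

theorem stmt_13 {R₀ : Type u} [CommRing R₀] [IsArtinianRing R₀]
    {Λ : Type u} [Ring Λ] [Algebra R₀ Λ] [Module.Finite R₀ Λ]
    (a : Λ) [Fact (IsIdempotentElem a)]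
    (S : Type u) [AddCommGroup S] [Module Λ S] [IsSimpleModule Λ S]
    (hann : ∃ s : S, a • s ≠ 0)
    (P : Type u) [AddCommGroup P] [Module Λ P] [Module.Projective Λ P]
    (f : P →ₗ[Λ] S) (hsurj : Function.Surjective f)
    (hsmall : ∀ N : Submodule Λ P, N ⊔ LinearMap.ker f = ⊤ → N = ⊤) :
    Module.Projective (Corner a) (CornerMod a P) :=
  stmt_13_general a S hann P f hsurj hsmall
end
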